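/- For c.h.p.o.'s K and K', the h.p.o. [K → K'] of continuous functors, ordered pointwise, is itself a c.h.p.o.: the constant functor λx.0' is a minimum element, and the supremum of a directed F ⊆ [K → K'] is given pointwise by (⋁F)(x) = ⋁⟨f(x) | f ∈ F⟩. -/
import Mathlib


universe u v w

/-- Vertices `x, y` of an h.p.o. (the largest sub-Kan complex of a 0-∞-category, modelled
by the preorder of its vertices under the weak order `≾`) are equivalent (`x ≃ y`) if
`x ≾ y` and `y ≾ x`. -/
def HEquiv {K : Type u} [Preorder K] (x y : K) : Prop := x ≤ y ∧ y ≤ x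

/-- A sub-h.p.o. `X ⊆ K` is directed if it is nonempty and any two of its vertices admit an
upper bound in `X`. -/
def HDirected {K : Type u} [Preorder K] (X : Set K) : Prop :=
  X.Nonempty ∧ ∀ x ∈ X, ∀ y ∈ X, ∃ z ∈ X, x ≤ z ∧ y ≤ z

/-- An h.p.o. `K` is a complete homotopy partial order (c.h.p.o.) if it has a minimum element
and every directed sub-h.p.o. has a supremum (a least upper bound, unique up to `HEquiv`). -/
def IsCHPO (K : Type u) [Preorder K] : Prop :=
  (∃ b : K, ∀ x, b ≤ x) ∧ ∀ X : Set K, HDirected X → ∃ s, IsLUB X s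

/-- A functor `f : K → K'` of c.h.p.o.'s is continuous if `f(⋁X) ≃ ⋁ f(X)` for every
directed `X ⊆ K`, i.e. `f` sends any supremum of a directed set to a supremum of its image. -/
def HContinuous {K : Type u} {K' : Type v} [Preorder K] [Preorder K'] (f : K → K') : Prop :=
  ∀ X : Set K, HDirected X → ∀ s : K, IsLUB X s → IsLUB (f '' X) (f s)

/-- `[K → K']`: the h.p.o. of continuous functors from `K` to `K'`. -/
def ContHom (K : Type u) (K' : Type v) [Preorder K] [Preorder K'] : Type (max u v) :=
  {f : K → K' // HContinuous f}

/-- The pointwise order on `[K → K']`: `f ≾ g` iff `f x ≾ g x` for all `x ∈ K`. -/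
instance ContHom.instPreorder {K : Type u} {K' : Type v} [Preorder K] [Preorder K'] :
    Preorder (ContHom K K') :=
  Preorder.lift (fun f => (f.1 : K → K'))

lemma HContinuous.monotone' {K : Type u} {K' : Type v} [Preorder K] [Preorder K']
    {f : K → K'} (hf : HContinuous f) : Monotone f := by
  intro x y hxy
  have hd : HDirected ({x, y} : Set K) := by
    refine ⟨⟨x, by simp⟩, ?_⟩
    intro a ha b hb
    refine ⟨y, by simp, ?_, ?_⟩ <;>
      [rcases ha with rfl | rfl; rcases hb with rfl | rfl] <;> simp [hxy]
  have hlub : IsLUB ({x, y} : Set K) y := by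
    constructor
    · rintro a (rfl | rfl)
      exacts [hxy, le_rfl]
    · intro u hu
      exact hu (by simp)
  exact (hf _ hd y hlub).1 ⟨x, by simp, rfl⟩

/-- For c.h.p.o.'s `K`, `K'`, the h.p.o. `[K → K']` of continuous functors, ordered
pointwise, is itself a c.h.p.o.: the constant functor `λ x. 0'` (where `0'` is the minimum
of `K'`) is a minimum element, and the supremum of a directed `F ⊆ [K → K']` is given
pointwise by `(⋁F)(x) = ⋁⟨f x | f ∈ F⟩`. -/
theorem contHom_isCHPO {K : Type u} {K' : Type v} [Preorder K] [Preorder K']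
    (hK : IsCHPO K) (hK' : IsCHPO K') :
    IsCHPO (ContHom K K') ∧
      (∃ z : ContHom K K',
        (∃ b : K', (∀ y, b ≤ y) ∧ z.1 = fun _ => b) ∧ ∀ f : ContHom K K', z ≤ f) ∧
      ∀ F : Set (ContHom K K'), HDirected F →
        ∃ g : ContHom K K',
          (∀ x : K, IsLUB ((fun f : ContHom K K' => f.1 x) '' F) (g.1 x)) ∧ IsLUB F g := by
  obtain ⟨⟨b, hb⟩, hsup⟩ := hK'
  have hbc : HContinuous (fun _ : K => b) := by
    intro X hX s hs
    constructor
    · rintro y ⟨x, hx, rfl⟩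
      exact le_rfl
    · intro u hu
      obtain ⟨x, hx⟩ := hX.1
      exact hu ⟨x, hx, rfl⟩
  set z : ContHom K K' := ⟨fun _ => b, hbc⟩ with hzdef
  have hz : ∀ f : ContHom K K', z ≤ f := fun f x => hb _
  have hsups : ∀ F : Set (ContHom K K'), HDirected F →
      ∃ g : ContHom K K',
        (∀ x : K, IsLUB ((fun f : ContHom K K' => f.1 x) '' F) (g.1 x)) ∧ IsLUB F g := by
    intro F hF
    have hdir : ∀ x : K, HDirected ((fun f : ContHom K K' => f.1 x) '' F) := by
      intro x
      refine ⟨hF.1.image _, ?_⟩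
      rintro _ ⟨f, hf, rfl⟩ _ ⟨f', hf', rfl⟩
      obtain ⟨h, hh, h1, h2⟩ := hF.2 f hf f' hf'
      exact ⟨h.1 x, ⟨h, hh, rfl⟩, h1 x, h2 x⟩
    choose g hg using fun x => hsup _ (hdir x)
    have hgc : HContinuous g := by
      intro X hX s hs
      constructor
      · rintro _ ⟨x, hx, rfl⟩
        refine (hg x).2 ?_
        rintro _ ⟨f, hf, rfl⟩
        exact le_trans (f.2.monotone' (hs.1 hx)) ((hg s).1 ⟨f, hf, rfl⟩)
      · intro u hu
        refine (hg s).2 ?_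
        rintro _ ⟨f, hf, rfl⟩
        refine (f.2 X hX s hs).2 ?_
        rintro _ ⟨x, hx, rfl⟩
        exact le_trans ((hg x).1 ⟨f, hf, rfl⟩) (hu ⟨x, hx, rfl⟩)
    refine ⟨⟨g, hgc⟩, fun x => hg x, ?_, ?_⟩
    · intro f hf x
      exact (hg x).1 ⟨f, hf, rfl⟩
    · intro h hh x
      refine (hg x).2 ?_
      rintro _ ⟨f, hf, rfl⟩
      exact hh hf x
  refine ⟨⟨⟨z, hz⟩, fun F hF => ?_⟩, ⟨z, ⟨b, hb, rfl⟩, hz⟩, hsups⟩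
  obtain ⟨g, _, hg⟩ := hsups F hF
  exact ⟨g, hg⟩
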